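/- Let M ≥ 1 and let T be the star with center c and leaves v_1, …, v_M, rooted at c. Let P_j denote the path of T consisting of the single edge between c and v_j, and let 𝒯 = {T} ∪ {P_1, …, P_M}. Define capacities k_c = M and k_o = 1 for every other object o of T. Then: (1) {T} is feasible; (2) for every j, the set {T, P_j} is infeasible (so a greedy run that considers the subtree T first outputs the single subtree {T}); and (3) the set {P_1, …, P_M} is feasible and has cardinality M. Consequently the greedy algorithm can output a solution of size 1 while a feasible solution of size M exists, so the approximation ratio of the greedy algorithm is not better than M. -/

import Mathlib

/-!
The tight example for the greedy algorithm: `T` is the star with center `none` and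
`M` leaves `some 0, …, some (M-1)`, rooted at its center. The family of subtrees,
indexed by `Option (Fin M)`, consists of the whole star `T` (index `none`) and the
single-edge paths `P_j` from the center to the leaf `some j` (index `some j`).
Capacities: `M` on the center vertex and `1` on every other object (leaf or edge).
-/

open Finset

attribute [local instance] Classical.propDecidable

/-- An *object* of a graph on vertex type `V`: a vertex or a (potential) edge. -/
abbrev Object (V : Type) := V ⊕ Sym2 V

/-- The subtree of `G` with vertex set `s` contains the object `o`. -/
def ContainsObj {V : Type} (G : SimpleGraph V) (s : Finset V) : Object V → Prop
  | Sum.inl v => v ∈ s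
  | Sum.inr e => e ∈ G.edgeSet ∧ ∀ x ∈ e, x ∈ s

/-- The load induced by the subfamily `U` on the object `o`. -/
noncomputable def load {V ι : Type} (G : SimpleGraph V) (S : ι → Finset V)
    (U : Finset ι) (o : Object V) : ℕ :=
  (U.filter fun i => ContainsObj G (S i) o).card

/-- A subfamily of subtrees is feasible if it does not overload any object. -/
def Feasible {V ι : Type} (G : SimpleGraph V) (S : ι → Finset V)
    (k : Object V → ℕ) (U : Finset ι) : Prop :=
  ∀ o : Object V, load G S U o ≤ k o

/-- The star with center `none` and leaves `some j`, `j : Fin M`. -/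
def starG (M : ℕ) : SimpleGraph (Option (Fin M)) where
  Adj a b := a ≠ b ∧ (a = none ∨ b = none)
  symm := by
    constructor
    intro a b h
    exact ⟨h.1.symm, h.2.symm⟩
  loopless := by
    constructor
    intro a h
    exact h.1 rfl

/-- The family of subtrees: index `none` is the whole star `T`, and index `some j`
is the path `P_j` consisting of the single edge between the center and leaf `j`. -/
def starFam (M : ℕ) : Option (Fin M) → Finset (Option (Fin M))
  | none => univ
  | some j => {none, some j}

/-- Capacities: `M` on the center vertex, `1` on every other object. -/
def starCap (M : ℕ) : Object (Option (Fin M)) → ℕ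
  | Sum.inl none => M
  | _ => 1
/-!
Greedy is fooled because the whole star `T` exhausts the capacity `1` of every edge, so
no path can join it, while the paths `P_j` are pairwise disjoint away from the center,
whose capacity `M` accommodates all of them.
-/

section Load

variable {V ι : Type} (G : SimpleGraph V) (S : ι → Finset V)

theorem load_le_card (U : Finset ι) (o : Object V) : load G S U o ≤ U.card :=
  card_filter_le _ _

theorem load_eq_card_of_forall_containsObj {U : Finset ι} {o : Object V}
    (h : ∀ i ∈ U, ContainsObj G (S i) o) : load G S U o = U.card := by
  rw [load, filter_true_of_mem h]

theorem load_le_one_of_containsObj_unique {U : Finset ι} {o : Object V}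
    (h : ∀ i ∈ U, ∀ j ∈ U, ContainsObj G (S i) o → ContainsObj G (S j) o → i = j) :
    load G S U o ≤ 1 := by
  refine card_le_one.mpr fun i hi j hj => ?_
  rw [mem_filter] at hi hj
  exact h i hi.1 j hj.1 hi.2 hj.2

theorem feasible_of_card_le {k : Object V → ℕ} {U : Finset ι} (h : ∀ o, U.card ≤ k o) :
    Feasible G S k U :=
  fun o => (load_le_card G S U o).trans (h o)

theorem not_feasible_of_forall_containsObj {k : Object V → ℕ} {U : Finset ι} (o : Object V)
    (h : ∀ i ∈ U, ContainsObj G (S i) o) (hk : k o < U.card) : ¬ Feasible G S k U := by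
  intro hU
  have := hU o
  rw [load_eq_card_of_forall_containsObj G S h] at this
  omega

end Load

section Star

variable {M : ℕ}

theorem starG_adj_none_some (j : Fin M) : (starG M).Adj none (some j) :=
  ⟨(Option.some_ne_none j).symm, Or.inl rfl⟩

theorem containsObj_starFam_none_edge (j : Fin M) :
    ContainsObj (starG M) (starFam M none) (.inr s(none, some j)) :=
  ⟨starG_adj_none_some j, fun x _ => mem_univ x⟩

theorem containsObj_starFam_some_iff {j : Fin M} {o : Object (Option (Fin M))} :
    ContainsObj (starG M) (starFam M (some j)) o ↔
      o = .inl none ∨ o = .inl (some j) ∨ o = .inr s(none, some j) := by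
  rcases o with v | e
  · simp [ContainsObj, starFam]
  · induction e using Sym2.ind with
    | _ x y =>
      rcases x with _ | x <;> rcases y with _ | y <;>
        simp [ContainsObj, starFam, starG, eq_comm]

theorem eq_of_containsObj_starFam_some {o : Object (Option (Fin M))} (ho : o ≠ .inl none)
    {j j' : Fin M} (h : ContainsObj (starG M) (starFam M (some j)) o)
    (h' : ContainsObj (starG M) (starFam M (some j')) o) : j = j' := by
  rw [containsObj_starFam_some_iff] at h h'
  rcases h with rfl | rfl | rfl
  · exact absurd rfl ho
  all_goals rcases h' with h' | h' | h' <;> simp_all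

theorem one_le_starCap (hM : 1 ≤ M) : ∀ o, 1 ≤ starCap M o
  | .inl none => hM
  | .inl (some _) | .inr _ => le_rfl

theorem starCap_eq_one : ∀ {o : Object (Option (Fin M))}, o ≠ .inl none → starCap M o = 1
  | .inl none, ho => absurd rfl ho
  | .inl (some _), _ | .inr _, _ => rfl

theorem card_filter_ne_none : (univ.filter fun i : Option (Fin M) => i ≠ none).card = M := by
  simp [filter_ne']

theorem feasible_starFam_paths :
    Feasible (starG M) (starFam M) (starCap M) (univ.filter fun i => i ≠ none) := by
  intro o
  by_cases ho : o = .inl none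
  · subst ho
    exact (load_le_card _ _ _ _).trans card_filter_ne_none.le
  · rw [starCap_eq_one ho]
    refine load_le_one_of_containsObj_unique _ _ fun i hi i' hi' h h' => ?_
    obtain ⟨j, rfl⟩ := Option.ne_none_iff_exists'.mp (mem_filter.mp hi).2
    obtain ⟨j', rfl⟩ := Option.ne_none_iff_exists'.mp (mem_filter.mp hi').2
    rw [eq_of_containsObj_starFam_some ho h h']

end Star

/-- **Tight example for the greedy algorithm.** On the star with center capacity `M`
and all other capacities `1`: (1) the whole star `T` alone is feasible; (2) for every
`j`, the set `{T, P_j}` is infeasible (so a greedy run considering `T` first outputs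
just `{T}`, of size 1); (3) the set `{P_1, …, P_M}` of all `M` single-edge paths is
feasible and has cardinality `M`. Hence the greedy algorithm can output a solution of
size `1` while a feasible solution of size `M` exists, so its approximation ratio is
not better than `M`. -/
theorem statement2 (M : ℕ) (hM : 1 ≤ M) :
    -- (1) `{T}` is feasible
    Feasible (starG M) (starFam M) (starCap M) {none} ∧
    -- (2) for every `j`, the set `{T, P_j}` is infeasible
    (∀ j : Fin M, ¬ Feasible (starG M) (starFam M) (starCap M) {none, some j}) ∧
    -- (3) `{P_1, …, P_M}` is feasible and has cardinality `M`
    Feasible (starG M) (starFam M) (starCap M) (univ.filter fun i => i ≠ none) ∧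
    (univ.filter fun i : Option (Fin M) => i ≠ none).card = M := by
  refine ⟨feasible_of_card_le _ _ fun o => ?_, fun j => ?_, feasible_starFam_paths,
    card_filter_ne_none⟩
  · simpa using one_le_starCap hM o
  · have hboth : ∀ i ∈ ({none, some j} : Finset _),
        ContainsObj (starG M) (starFam M i) (.inr s(none, some j)) := by
      simp only [mem_insert, mem_singleton, forall_eq_or_imp, forall_eq]
      exact ⟨containsObj_starFam_none_edge j, containsObj_starFam_some_iff.mpr (by simp)⟩
    refine not_feasible_of_forall_containsObj _ _ _ hboth ?_
    simp [starCap]
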